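/- Correctness of the acyclic tuple-sensitivity algorithm (TSens): in the join-tree model, for every vertex i and every tuple t ∈ Π_{A ∈ 𝔸_i} V(A), the upward tuple sensitivity factorizes as δ⁺(t,i) = ⊤_i(t|_{S_i}) · ∏_{c ∈ children(i)} ⊥_c(t|_{S_c}) (where the factor ⊤_i(t|_{S_i}) equals 1 when i is the root, and the product over children is empty, hence 1, when i is a leaf). -/

import Mathlib

/-!
Inserting `t` into `R_i` adds exactly the terms of `Q(D)` whose assignment extends `t`, so
`δ⁺(t,i) = Σ_{w ⊇ t} ∏_{j ≠ i} R_j(w|_{𝔸_j})`. Removing `i` splits the join tree into the part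
above `i` and the subtrees below its children. By the running intersection property two of
these branches share attributes only inside `𝔸_i`, and each branch meets `𝔸_i` only in its
separator. Once `t` fixes the attributes of `𝔸_i`, the sum therefore factors into one
independent sum per branch: `⊤_i(t|_{S_i})` for the part above `i` and `⊥_c(t|_{S_c})` for
the subtree of a child `c`.
-/

open Finset
open scoped Classical

/-- `inSub p i j`: vertex `j` belongs to `T(i)`, the subtree rooted at `i`, where `p` is
the parent function of the rooted tree (iterating `p` from `j` reaches `i`). -/
def inSub {m : ℕ} (p : Fin m → Fin m) (i j : Fin m) : Prop :=
  ∃ k : ℕ, p^[k] j = i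

/-- The separator `S_i = 𝔸_i ∩ 𝔸_{p(i)}` of a non-root vertex `i`; `S_r = ∅` for the
root `r`. -/
def sepAttr {m : ℕ} {A : Type} [DecidableEq A] (Atr : Fin m → Finset A)
    (p : Fin m → Fin m) (r : Fin m) (i : Fin m) : Finset A :=
  if i = r then ∅ else Atr i ∩ Atr (p i)

/-- The attributes `⋃_{j ∈ T(i)} 𝔸_j` appearing in the subtree rooted at `i`. -/
noncomputable def subAttr {m : ℕ} {A : Type} [DecidableEq A]
    (Atr : Fin m → Finset A) (p : Fin m → Fin m) (i : Fin m) : Finset A :=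
  (Finset.univ.filter fun j => inSub p i j).biUnion Atr

/-- The attributes `⋃_{j ∉ T(i)} 𝔸_j` appearing outside the subtree rooted at `i`. -/
noncomputable def topAttr {m : ℕ} {A : Type} [DecidableEq A]
    (Atr : Fin m → Finset A) (p : Fin m → Fin m) (i : Fin m) : Finset A :=
  (Finset.univ.filter fun j => ¬ inSub p i j).biUnion Atr

/-- Restriction of a partial assignment on `B` to a partial assignment on `C`
(intended for `C ⊆ B`; outside `B` an arbitrary value is used). -/
noncomputable def restrAny {A : Type} (V : A → Type) [∀ a, Nonempty (V a)]
    {B C : Finset A} (w : ∀ a : {x // x ∈ B}, V a.val) : ∀ a : {x // x ∈ C}, V a.val :=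
  fun a => if h : a.val ∈ B then w ⟨a.val, h⟩ else Classical.arbitrary _

/-- The botjoin `⊥_i : Π_{A ∈ S_i} V(A) → ℕ`:
`⊥_i(u) = Σ_{w on ⋃_{j ∈ T(i)} 𝔸_j, w|_{S_i} = u} ∏_{j ∈ T(i)} R_j(w|_{𝔸_j})`. -/
noncomputable def botJ {m : ℕ} {A : Type} [Fintype A] [DecidableEq A]
    (V : A → Type) [∀ a, Fintype (V a)] [∀ a, Nonempty (V a)]
    (Atr : Fin m → Finset A) (p : Fin m → Fin m) (r : Fin m)
    (R : ∀ i : Fin m, (∀ a : {x // x ∈ Atr i}, V a.val) → ℕ)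
    (i : Fin m) (u : ∀ a : {x // x ∈ sepAttr Atr p r i}, V a.val) : ℕ :=
  ∑ w : (∀ a : {x // x ∈ subAttr Atr p i}, V a.val),
    if restrAny V w = u then
      ∏ j ∈ Finset.univ.filter (fun j => inSub p i j), R j (restrAny V w)
    else 0

/-- The topjoin `⊤_i : Π_{A ∈ S_i} V(A) → ℕ`:
`⊤_i(u) = Σ_{w on ⋃_{j ∉ T(i)} 𝔸_j, w|_{S_i} = u} ∏_{j ∉ T(i)} R_j(w|_{𝔸_j})`
(for the root `r`, `⊤_r` is constantly `1` on the empty assignment). -/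
noncomputable def topJ {m : ℕ} {A : Type} [Fintype A] [DecidableEq A]
    (V : A → Type) [∀ a, Fintype (V a)] [∀ a, Nonempty (V a)]
    (Atr : Fin m → Finset A) (p : Fin m → Fin m) (r : Fin m)
    (R : ∀ i : Fin m, (∀ a : {x // x ∈ Atr i}, V a.val) → ℕ)
    (i : Fin m) (u : ∀ a : {x // x ∈ sepAttr Atr p r i}, V a.val) : ℕ :=
  ∑ w : (∀ a : {x // x ∈ topAttr Atr p i}, V a.val),
    if restrAny V w = u then
      ∏ j ∈ Finset.univ.filter (fun j => ¬ inSub p i j), R j (restrAny V w)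
    else 0

section
variable (m : ℕ) (A : Type) [Fintype A] [DecidableEq A] (V : A → Type)
  [∀ a, Fintype (V a)] [∀ a, DecidableEq (V a)]
  (S : Fin m → Finset A)
  (R : ∀ i : Fin m, (∀ a : {x // x ∈ S i}, V a.val) → ℕ)

/-- The output count (under bag semantics) of the full conjunctive query
`Q(𝔸) :- R_1(𝔸_1), …, R_m(𝔸_m)`: `Q(D) = Σ_{w ∈ Π_{A∈𝔸} V(A)} ∏_i R_i(w|_{𝔸_i})`. -/
def QC : ℕ :=
  ∑ w : (∀ a : A, V a), ∏ i : Fin m, R i fun a => w a.val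

/-- Insert one copy of the tuple `t` into relation `R_i`. -/
def insR (i : Fin m) (t : ∀ a : {x // x ∈ S i}, V a.val) :
    ∀ j : Fin m, (∀ a : {x // x ∈ S j}, V a.val) → ℕ :=
  Function.update R i fun s => if s = t then R i s + 1 else R i s

/-- Upward tuple sensitivity `δ⁺(t,i)`: the increase of the output count caused by
inserting `t` into `R_i`. -/
def deltaP (i : Fin m) (t : ∀ a : {x // x ∈ S i}, V a.val) : ℕ :=
  QC m A V S (insR m A V S R i t) - QC m A V S R

end

section Restriction

variable {A : Type} {V : A → Type} [∀ a, Nonempty (V a)]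

theorem restrAny_apply {B C : Finset A} (w : ∀ a : {x // x ∈ B}, V a.val) {a : A}
    (hC : a ∈ C) (hB : a ∈ B) : restrAny V w ⟨a, hC⟩ = w ⟨a, hB⟩ :=
  dif_pos hB

theorem restrAny_restrAny {B B' C : Finset A} (h : C ⊆ B') (w : ∀ a : {x // x ∈ B}, V a.val) :
    restrAny V (C := C) (restrAny V (C := B') w) = restrAny V w := by
  funext a
  rw [restrAny_apply _ a.2 (h a.2)]
  rfl

theorem restrAny_val {B C : Finset A} (h : C ⊆ B) (w : ∀ a, V a) :
    restrAny V (C := C) (fun a : {x // x ∈ B} => w a.val) = fun a : {x // x ∈ C} => w a.val := by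
  funext a
  exact restrAny_apply _ a.2 (h a.2)

variable [DecidableEq A] [∀ a, Fintype (V a)]

/-- The assignments of `B ∪ C` are the pairs of assignments of `B` and `C` that agree on
`B ∩ C`, and by `hfg` only such pairs contribute to the right-hand side. -/
theorem sum_restrAny_mul_restrAny (B C : Finset A) (f : (∀ a : {x // x ∈ B}, V a.val) → ℕ)
    (g : (∀ a : {x // x ∈ C}, V a.val) → ℕ)
    (hfg : ∀ u v, f u ≠ 0 → g v ≠ 0 → ∀ a (hB : a ∈ B) (hC : a ∈ C), u ⟨a, hB⟩ = v ⟨a, hC⟩) :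
    ∑ w : (∀ a : {x // x ∈ B ∪ C}, V a.val), f (restrAny V w) * g (restrAny V w)
      = (∑ u, f u) * ∑ v, g v := by
  rw [Fintype.sum_mul_sum, ← Fintype.sum_prod_type']
  refine Finset.sum_bij_ne_zero (fun w _ _ => (restrAny V w, restrAny V w))
    (fun _ _ _ => Finset.mem_univ _) ?_ ?_ (fun _ _ _ => rfl)
  · intro w _ _ w' _ _ h
    simp only [Prod.mk.injEq] at h
    funext a
    rcases Finset.mem_union.mp a.2 with ha | ha
    · have h1 := congrFun h.1 ⟨a, ha⟩
      rwa [restrAny_apply w ha a.2, restrAny_apply w' ha a.2] at h1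
    · have h2 := congrFun h.2 ⟨a, ha⟩
      rwa [restrAny_apply w ha a.2, restrAny_apply w' ha a.2] at h2
  · rintro ⟨u, v⟩ _ huv
    let w : ∀ a : {x // x ∈ B ∪ C}, V a.val := fun a =>
      if h : a.val ∈ B then u ⟨a, h⟩ else v ⟨a, (Finset.mem_union.mp a.2).resolve_left h⟩
    have hw : (restrAny V w, restrAny V w) = (u, v) := by
      refine Prod.ext (funext fun a => ?_) (funext fun a => ?_)
      · simp [w, restrAny_apply w a.2 (Finset.mem_union_left C a.2)]
      · change restrAny V w ⟨a.val, a.2⟩ = v a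
        rw [restrAny_apply w a.2 (Finset.mem_union_right B a.2)]
        by_cases hB : a.val ∈ B
        · simpa [w, hB] using
            hfg u v (left_ne_zero_of_mul huv) (right_ne_zero_of_mul huv) a hB a.2
        · simp [w, hB]
    obtain ⟨hu, hv⟩ := Prod.mk.inj hw
    refine ⟨w, Finset.mem_univ _, ?_, hw⟩
    rw [hu, hv]
    exact huv

theorem sum_prod_restrAny {ι : Type*} (J : Finset ι) (B : ι → Finset A)
    (f : ∀ k, (∀ a : {x // x ∈ B k}, V a.val) → ℕ)
    (hf : ∀ k ∈ J, ∀ l ∈ J, k ≠ l → ∀ u v, f k u ≠ 0 → f l v ≠ 0 →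
      ∀ a (hk : a ∈ B k) (hl : a ∈ B l), u ⟨a, hk⟩ = v ⟨a, hl⟩) :
    ∑ w : (∀ a : {x // x ∈ J.biUnion B}, V a.val), ∏ k ∈ J, f k (restrAny V w)
      = ∏ k ∈ J, ∑ u, f k u := by
  induction J using Finset.induction_on with
  | empty =>
    simp only [Finset.biUnion_empty, Finset.prod_empty, Finset.sum_const, smul_eq_mul, mul_one]
    exact Fintype.card_unique
  | @insert k J hk ih =>
    have hsub : ∀ l ∈ J, B l ⊆ J.biUnion B := fun l hl => Finset.subset_biUnion_of_mem B hl
    calc ∑ w : (∀ a : {x // x ∈ (insert k J).biUnion B}, V a.val),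
          ∏ l ∈ insert k J, f l (restrAny V w)
        = ∑ w : (∀ a : {x // x ∈ B k ∪ J.biUnion B}, V a.val),
            f k (restrAny V w) * ∏ l ∈ J, f l (restrAny V (restrAny V (C := J.biUnion B) w)) := by
          rw [Finset.biUnion_insert]
          refine Finset.sum_congr rfl fun w _ => ?_
          rw [Finset.prod_insert hk]
          congr 1
          exact Finset.prod_congr rfl fun l hl => by rw [restrAny_restrAny (hsub l hl)]
      _ = (∑ u, f k u) * ∑ v : (∀ a : {x // x ∈ J.biUnion B}, V a.val),
            ∏ l ∈ J, f l (restrAny V v) := by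
          refine sum_restrAny_mul_restrAny (B k) (J.biUnion B) (f k)
            (fun v => ∏ l ∈ J, f l (restrAny V v)) fun u v hu hv a ha haJ => ?_
          obtain ⟨l, hl, hal⟩ := Finset.mem_biUnion.mp haJ
          have hv' : f l (restrAny V v) ≠ 0 := fun h0 => hv (Finset.prod_eq_zero hl h0)
          rw [hf k (Finset.mem_insert_self k J) l (Finset.mem_insert_of_mem hl)
            (fun e => hk (e ▸ hl)) u _ hu hv' a ha hal, restrAny_apply v hal haJ]
      _ = ∏ l ∈ insert k J, ∑ u, f l u := by
          rw [ih fun l hl l' hl' => hf l (Finset.mem_insert_of_mem hl) l'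
            (Finset.mem_insert_of_mem hl'), Finset.prod_insert hk]

theorem sum_ite_restrAny_mul_prod {ι : Type*} (C : Finset A) (t : ∀ a : {x // x ∈ C}, V a.val)
    (J : Finset ι) (B S : ι → Finset A) (g : ∀ k, (∀ a : {x // x ∈ B k}, V a.val) → ℕ)
    (hSB : ∀ k ∈ J, S k ⊆ B k) (hSC : ∀ k ∈ J, S k ⊆ C) (hBC : ∀ k ∈ J, B k ∩ C ⊆ S k)
    (hBB : ∀ k ∈ J, ∀ l ∈ J, k ≠ l → B k ∩ B l ⊆ C) :
    ∑ w : (∀ a : {x // x ∈ C ∪ J.biUnion B}, V a.val),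
        (if restrAny V (C := C) w = t then 1 else 0) * ∏ k ∈ J, g k (restrAny V w)
      = ∏ k ∈ J, ∑ u, if restrAny V (C := S k) u = restrAny V t then g k u else 0 := by
  set h : ∀ k, (∀ a : {x // x ∈ B k}, V a.val) → ℕ :=
    fun k u => if restrAny V (C := S k) u = restrAny V t then g k u else 0
  have hagree : ∀ k ∈ J, ∀ u, h k u ≠ 0 →
      ∀ a (hB : a ∈ B k) (hC : a ∈ C), u ⟨a, hB⟩ = t ⟨a, hC⟩ := by
    intro k hk u hu a hB hC
    have hS : a ∈ S k := hBC k hk (Finset.mem_inter.mpr ⟨hB, hC⟩)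
    have := congrFun ((ite_ne_right_iff.mp hu).1) ⟨a, hS⟩
    rwa [restrAny_apply u hS hB, restrAny_apply t hS hC] at this
  calc ∑ w : (∀ a : {x // x ∈ C ∪ J.biUnion B}, V a.val),
        (if restrAny V (C := C) w = t then 1 else 0) * ∏ k ∈ J, g k (restrAny V w)
      = ∑ w : (∀ a : {x // x ∈ C ∪ J.biUnion B}, V a.val),
          (if restrAny V (C := C) w = t then 1 else 0)
            * ∏ k ∈ J, h k (restrAny V (restrAny V (C := J.biUnion B) w)) := by
        refine Finset.sum_congr rfl fun w _ => ?_
        by_cases hw : restrAny V (C := C) w = t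
        · refine congrArg _ (Finset.prod_congr rfl fun k hk => ?_)
          rw [restrAny_restrAny (Finset.subset_biUnion_of_mem B hk)]
          refine (if_pos ?_).symm
          rw [restrAny_restrAny (hSB k hk), ← hw, restrAny_restrAny (hSC k hk)]
        · simp [hw]
    _ = (∑ u : (∀ a : {x // x ∈ C}, V a.val), if u = t then 1 else 0)
          * ∑ v : (∀ a : {x // x ∈ J.biUnion B}, V a.val), ∏ k ∈ J, h k (restrAny V v) := by
        refine sum_restrAny_mul_restrAny C (J.biUnion B) (fun u => if u = t then 1 else 0)
          (fun v => ∏ k ∈ J, h k (restrAny V v)) fun u v hu hv a hC haJ => ?_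
        obtain ⟨k, hk, haB⟩ := Finset.mem_biUnion.mp haJ
        rw [(ite_ne_right_iff.mp hu).1, ← restrAny_apply v haB haJ]
        exact (hagree k hk _ (Finset.prod_ne_zero_iff.mp hv k hk) a haB hC).symm
    _ = ∏ k ∈ J, ∑ u, h k u := by
        rw [Finset.sum_ite_eq', if_pos (Finset.mem_univ t), one_mul]
        refine sum_prod_restrAny J B h fun k hk l hl hkl u v hu hv a hak hal => ?_
        have hC : a ∈ C := hBB k hk l hl hkl (Finset.mem_inter.mpr ⟨hak, hal⟩)
        rw [hagree k hk u hu a hak hC, hagree l hl v hv a hal hC]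

end Restriction

section Sensitivity
variable {m : ℕ} {A : Type} {V : A → Type} [∀ a, DecidableEq (V a)] {S : Fin m → Finset A}

theorem prod_insR (R : ∀ i : Fin m, (∀ a : {x // x ∈ S i}, V a.val) → ℕ) (i : Fin m)
    (t : ∀ a : {x // x ∈ S i}, V a.val) (w : ∀ a, V a) :
    ∏ j, insR m A V S R i t j (fun a => w a.val)
      = ∏ j, R j (fun a => w a.val)
        + (if (fun a : {x // x ∈ S i} => w a.val) = t then 1 else 0)
          * ∏ j ∈ Finset.univ.erase i, R j (fun a => w a.val) := by
  have hrest : ∏ j ∈ Finset.univ.erase i, insR m A V S R i t j (fun a => w a.val)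
      = ∏ j ∈ Finset.univ.erase i, R j (fun a => w a.val) :=
    Finset.prod_congr rfl fun j hj => by
      rw [insR, Function.update_of_ne (Finset.ne_of_mem_erase hj)]
  have hi : insR m A V S R i t i (fun a => w a.val)
      = R i (fun a => w a.val) + if (fun a : {x // x ∈ S i} => w a.val) = t then 1 else 0 := by
    simp only [insR, Function.update_self]
    split_ifs <;> rfl
  rw [← Finset.mul_prod_erase _ _ (Finset.mem_univ i), hrest, hi,
    ← Finset.mul_prod_erase Finset.univ (fun j => R j fun a => w a.val) (Finset.mem_univ i),
    add_mul]

theorem deltaP_eq_sum [Fintype A] [DecidableEq A] [∀ a, Fintype (V a)]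
    (R : ∀ i : Fin m, (∀ a : {x // x ∈ S i}, V a.val) → ℕ) (i : Fin m)
    (t : ∀ a : {x // x ∈ S i}, V a.val) :
    deltaP m A V S R i t
      = ∑ w : (∀ a, V a), (if (fun a : {x // x ∈ S i} => w a.val) = t then 1 else 0)
          * ∏ j ∈ Finset.univ.erase i, R j (fun a => w a.val) := by
  rw [deltaP, QC, QC, Finset.sum_congr rfl fun w _ => prod_insR R i t w, Finset.sum_add_distrib,
    Nat.add_sub_cancel_left]

end Sensitivity

section Tree
variable {m : ℕ} {p : Fin m → Fin m} {r : Fin m}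

theorem inSub_self (i : Fin m) : inSub p i i := ⟨0, rfl⟩

theorem inSub_of_parent_eq {i c j : Fin m} (hc : p c = i) (hj : inSub p c j) : inSub p i j := by
  obtain ⟨k, hk⟩ := hj
  exact ⟨k + 1, by rw [Function.iterate_succ_apply', hk, hc]⟩

theorem inSub_parent {i j : Fin m} (hj : inSub p i j) (hji : j ≠ i) : inSub p i (p j) := by
  obtain ⟨_ | k, hk⟩ := hj
  · exact absurd hk hji
  · exact ⟨k, hk⟩

theorem inSub_total {c c' j : Fin m} (h : inSub p c j) (h' : inSub p c' j) :
    inSub p c c' ∨ inSub p c' c := by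
  obtain ⟨k, rfl⟩ := h
  obtain ⟨k', rfl⟩ := h'
  rcases Nat.le_total k k' with hle | hle
  · exact Or.inr ⟨k' - k, by rw [← Function.iterate_add_apply, Nat.sub_add_cancel hle]⟩
  · exact Or.inl ⟨k - k', by rw [← Function.iterate_add_apply, Nat.sub_add_cancel hle]⟩

theorem eq_root_of_iterate_eq (hroot : p r = r) (hreach : ∀ j, ∃ k, p^[k] j = r) {x : Fin m}
    {n : ℕ} (hx : p^[n + 1] x = x) : x = r := by
  obtain ⟨k, hk⟩ := hreach x
  have hper : p^[(n + 1) * k] x = x := (Function.IsPeriodicPt.mul_const hx k).eq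
  have hle : k ≤ (n + 1) * k := Nat.le_mul_of_pos_left k n.succ_pos
  rw [← hper, ← Nat.sub_add_cancel hle, Function.iterate_add_apply, hk,
    Function.iterate_fixed hroot]

theorem not_inSub_parent (hroot : p r = r) (hreach : ∀ j, ∃ k, p^[k] j = r) {i : Fin m}
    (hir : i ≠ r) : ¬ inSub p i (p i) :=
  fun ⟨_, hk⟩ => hir (eq_root_of_iterate_eq hroot hreach hk)

theorem exists_child_inSub (hroot : p r = r) {i j : Fin m} (hj : inSub p i j) (hji : j ≠ i) :
    ∃ c, p c = i ∧ c ≠ r ∧ inSub p c j := by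
  obtain ⟨k, hk⟩ := hj
  induction k with
  | zero => exact absurd hk hji
  | succ n ih =>
    by_cases hn : p^[n] j = i
    · exact ih hn
    · have hpc : p (p^[n] j) = i := by rwa [← Function.iterate_succ_apply' p n j]
      refine ⟨p^[n] j, hpc, fun hr => hn ?_, n, rfl⟩
      rw [hr] at hpc ⊢
      exact hroot.symm.trans hpc

theorem exists_iterate_eq_of_inSub (i : Fin m) (k : ℕ) {j : Fin m} (hj : inSub p i j)
    (hk : ¬ inSub p i (p^[k] j)) : ∃ l < k, p^[l] j = i := by
  induction k generalizing j with
  | zero => exact absurd hj hk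
  | succ n ih =>
    by_cases hpj : inSub p i (p j)
    · obtain ⟨l, hl, hli⟩ := ih hpj (by rwa [← Function.iterate_succ_apply])
      exact ⟨l + 1, Nat.succ_lt_succ hl, hli⟩
    · exact ⟨0, n.succ_pos, of_not_not fun hji => hpj (inSub_parent hj hji)⟩

end Tree

section Branches
variable {m : ℕ} {p : Fin m → Fin m} {r : Fin m}

def children (p : Fin m → Fin m) (r i : Fin m) : Finset (Fin m) :=
  Finset.univ.filter fun c => p c = i ∧ c ≠ r

/-- Removing `i` splits the tree into the part above `i` (`none`) and the subtrees `T(c)` of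
the children `c` of `i` (`some c`). -/
noncomputable def branch (p : Fin m → Fin m) (i : Fin m) : Option (Fin m) → Finset (Fin m)
  | none => Finset.univ.filter fun j => ¬ inSub p i j
  | some c => Finset.univ.filter fun j => inSub p c j

theorem not_inSub_of_mem_children (hroot : p r = r) (hreach : ∀ j, ∃ k, p^[k] j = r)
    {i c : Fin m} (hc : c ∈ children p r i) : ¬ inSub p c i := by
  obtain ⟨hci, hcr⟩ := (Finset.mem_filter.mp hc).2
  exact hci ▸ not_inSub_parent hroot hreach hcr

theorem biUnion_branch (hroot : p r = r) (hreach : ∀ j, ∃ k, p^[k] j = r) (i : Fin m) :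
    (Finset.insertNone (children p r i)).biUnion (branch p i) = Finset.univ.erase i := by
  ext j
  simp only [Finset.mem_biUnion, Finset.mem_insertNone, Finset.mem_erase, Finset.mem_univ,
    and_true]
  constructor
  · rintro ⟨_ | c, hc, hj⟩ rfl
    · simp [branch, inSub_self] at hj
    · simp only [branch, Finset.mem_filter, Finset.mem_univ, true_and] at hj
      exact not_inSub_of_mem_children hroot hreach (hc c rfl) hj
  · intro hji
    by_cases hj : inSub p i j
    · obtain ⟨c, hc, hcr, hcj⟩ := exists_child_inSub hroot hj hji
      exact ⟨some c, by simpa [children] using ⟨hc, hcr⟩, by simpa [branch] using hcj⟩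
    · exact ⟨none, by simp, by simpa [branch] using hj⟩

theorem pairwiseDisjoint_branch (hroot : p r = r) (hreach : ∀ j, ∃ k, p^[k] j = r) (i : Fin m) :
    (Finset.insertNone (children p r i) : Set (Option (Fin m))).PairwiseDisjoint (branch p i) := by
  have hchild : ∀ c ∈ children p r i, p c = i := fun c hc => (Finset.mem_filter.mp hc).2.1
  rintro (_ | c) hc (_ | c') hc' hne <;>
    simp only [Finset.mem_coe, Finset.some_mem_insertNone] at hc hc' <;>
    simp only [Function.onFun, Finset.disjoint_left, branch, Finset.mem_filter,
      Finset.mem_univ, true_and, not_not]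
  · exact absurd rfl hne
  · exact fun j hj hj' => hj (inSub_of_parent_eq (hchild c' hc') hj')
  · exact fun j hj => inSub_of_parent_eq (hchild c hc) hj
  · intro j hj hj'
    have hcc' : c ≠ c' := fun h => hne (congrArg some h)
    rcases inSub_total hj hj' with h | h
    · exact not_inSub_of_mem_children hroot hreach hc
        (hchild c' hc' ▸ inSub_parent h (Ne.symm hcc'))
    · exact not_inSub_of_mem_children hroot hreach hc'
        (hchild c hc ▸ inSub_parent h hcc')

end Branches

section Separators
variable {m : ℕ} {A : Type} {Atr : Fin m → Finset A} {p : Fin m → Fin m} {r : Fin m}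

/-- The path from `j` to the vertex `t` given by `hRI` carries `a` and leaves `T(i)`, so it
passes through `i` and then `p i`. -/
theorem mem_Atr_of_inSub_of_not_inSub
    (hRI : ∀ a : A, ∃ t : Fin m, ∀ i : Fin m, a ∈ Atr i →
        ∃ k : ℕ, p^[k] i = t ∧ ∀ l ≤ k, a ∈ Atr (p^[l] i))
    {i j j' : Fin m} {a : A} (hj : inSub p i j) (hj' : ¬ inSub p i j') (ha : a ∈ Atr j)
    (ha' : a ∈ Atr j') : a ∈ Atr i ∧ a ∈ Atr (p i) := by
  obtain ⟨v, hv⟩ := hRI a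
  obtain ⟨k', hk', -⟩ := hv j' ha'
  obtain ⟨k, hk, hpath⟩ := hv j ha
  have hout : ¬ inSub p i (p^[k] j) := by
    rintro ⟨n, hn⟩
    exact hj' ⟨n + k', by rw [Function.iterate_add_apply, hk', ← hk, hn]⟩
  obtain ⟨l, hl, hli⟩ := exists_iterate_eq_of_inSub i k hj hout
  refine ⟨hli ▸ hpath l hl.le, ?_⟩
  have := hpath (l + 1) hl
  rwa [Function.iterate_succ_apply', hli] at this

variable [DecidableEq A]

theorem mem_sepAttr_of_mem_branch (hreach : ∀ j, ∃ k, p^[k] j = r)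
    (hRI : ∀ a : A, ∃ t : Fin m, ∀ i : Fin m, a ∈ Atr i →
        ∃ k : ℕ, p^[k] i = t ∧ ∀ l ≤ k, a ∈ Atr (p^[l] i))
    {i : Fin m} {k : Option (Fin m)} (hk : k ∈ Finset.insertNone (children p r i))
    {j j' : Fin m} {a : A} (hj : j ∈ branch p i k) (hj' : j' ∉ branch p i k) (ha : a ∈ Atr j)
    (ha' : a ∈ Atr j') : a ∈ sepAttr Atr p r (k.getD i) := by
  cases k with
  | none =>
    simp only [branch, Finset.mem_filter, Finset.mem_univ, true_and, not_not] at hj hj'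
    have hir : i ≠ r := fun h => hj (h ▸ hreach j)
    rw [Option.getD_none, sepAttr, if_neg hir, Finset.mem_inter]
    exact mem_Atr_of_inSub_of_not_inSub hRI hj' hj ha' ha
  | some c =>
    simp only [branch, Finset.mem_filter, Finset.mem_univ, true_and] at hj hj'
    have hcr : c ≠ r := (Finset.mem_filter.mp (Finset.some_mem_insertNone.mp hk)).2.2
    rw [Option.getD_some, sepAttr, if_neg hcr, Finset.mem_inter]
    exact mem_Atr_of_inSub_of_not_inSub hRI hj hj' ha ha'

theorem sepAttr_subset (i : Fin m) : sepAttr Atr p r i ⊆ Atr i := by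
  unfold sepAttr
  split_ifs
  exacts [Finset.empty_subset _, Finset.inter_subset_left]

theorem sepAttr_subset_Atr {i : Fin m} {k : Option (Fin m)}
    (hk : k ∈ Finset.insertNone (children p r i)) : sepAttr Atr p r (k.getD i) ⊆ Atr i := by
  cases k with
  | none => exact sepAttr_subset i
  | some c =>
    obtain ⟨hci, hcr⟩ := (Finset.mem_filter.mp (Finset.some_mem_insertNone.mp hk)).2
    rw [Option.getD_some, sepAttr, if_neg hcr, hci]
    exact Finset.inter_subset_right

theorem sepAttr_subset_biUnion_branch (hroot : p r = r) (hreach : ∀ j, ∃ k, p^[k] j = r)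
    {i : Fin m} {k : Option (Fin m)} (hk : k ∈ Finset.insertNone (children p r i)) :
    sepAttr Atr p r (k.getD i) ⊆ (branch p i k).biUnion Atr := by
  cases k with
  | none =>
    rw [Option.getD_none, sepAttr]
    split_ifs with hir
    · exact Finset.empty_subset _
    · refine Finset.inter_subset_right.trans (Finset.subset_biUnion_of_mem Atr ?_)
      simpa [branch] using not_inSub_parent hroot hreach hir
  | some c =>
    refine (sepAttr_subset c).trans (Finset.subset_biUnion_of_mem Atr ?_)
    simpa [branch] using inSub_self c

end Separators

theorem sum_ite_mul_prod_erase_eq_prod_sum {m : ℕ} {A : Type} [Fintype A] [DecidableEq A]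
    {V : A → Type} [∀ a, Fintype (V a)] [∀ a, Nonempty (V a)]
    (Atr : Fin m → Finset A) (hcov : ∀ a : A, ∃ i : Fin m, a ∈ Atr i)
    (R : ∀ i : Fin m, (∀ a : {x // x ∈ Atr i}, V a.val) → ℕ)
    (i : Fin m) (t : ∀ a : {x // x ∈ Atr i}, V a.val)
    {ι : Type*} (J : Finset ι) (P : ι → Finset (Fin m)) (S : ι → Finset A)
    (hP : J.biUnion P = Finset.univ.erase i) (hPd : (J : Set ι).PairwiseDisjoint P)
    (hSP : ∀ k ∈ J, S k ⊆ (P k).biUnion Atr) (hSi : ∀ k ∈ J, S k ⊆ Atr i)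
    (hsep : ∀ k ∈ J, ∀ j ∈ P k, ∀ j' ∉ P k, ∀ a ∈ Atr j, a ∈ Atr j' → a ∈ S k) :
    ∑ w : (∀ a, V a), (if (fun a : {x // x ∈ Atr i} => w a.val) = t then 1 else 0)
        * ∏ j ∈ Finset.univ.erase i, R j (fun a => w a.val)
      = ∏ k ∈ J, ∑ u : (∀ a : {x // x ∈ (P k).biUnion Atr}, V a.val),
          if restrAny V (C := S k) u = restrAny V t then ∏ j ∈ P k, R j (restrAny V u) else 0 := by
  set B : ι → Finset A := fun k => (P k).biUnion Atr
  have hnot_i : ∀ k ∈ J, i ∉ P k := fun k hk hi =>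
    (Finset.mem_erase.mp (hP ▸ Finset.mem_biUnion.mpr ⟨k, hk, hi⟩)).1 rfl
  have hBi : ∀ k ∈ J, B k ∩ Atr i ⊆ S k := fun k hk a ha => by
    obtain ⟨j, hj, haj⟩ := Finset.mem_biUnion.mp (Finset.mem_inter.mp ha).1
    exact hsep k hk j hj i (hnot_i k hk) a haj (Finset.mem_inter.mp ha).2
  have hBB : ∀ k ∈ J, ∀ l ∈ J, k ≠ l → B k ∩ B l ⊆ Atr i := fun k hk l hl hkl a ha => by
    obtain ⟨j, hj, haj⟩ := Finset.mem_biUnion.mp (Finset.mem_inter.mp ha).1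
    obtain ⟨j', hj', haj'⟩ := Finset.mem_biUnion.mp (Finset.mem_inter.mp ha).2
    exact hSi k hk (hsep k hk j hj j' (Finset.disjoint_right.mp (hPd hk hl hkl) hj') a haj haj')
  have hcover : ∀ a, a ∈ Atr i ∪ J.biUnion B := fun a => by
    obtain ⟨j, hj⟩ := hcov a
    by_cases hji : j = i
    · exact Finset.mem_union_left _ (hji ▸ hj)
    · have hjP : j ∈ J.biUnion P := hP ▸ Finset.mem_erase.mpr ⟨hji, Finset.mem_univ j⟩
      obtain ⟨k, hk, hjk⟩ := Finset.mem_biUnion.mp hjP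
      exact Finset.mem_union_right _
        (Finset.mem_biUnion.mpr ⟨k, hk, Finset.mem_biUnion.mpr ⟨j, hjk, hj⟩⟩)
  let e : (∀ a, V a) ≃ (∀ a : {x // x ∈ Atr i ∪ J.biUnion B}, V a.val) :=
    { toFun := fun w a => w a.val
      invFun := fun W a => W ⟨a, hcover a⟩
      left_inv := fun _ => rfl
      right_inv := fun _ => rfl }
  rw [← sum_ite_restrAny_mul_prod (Atr i) t J B S (fun k u => ∏ j ∈ P k, R j (restrAny V u))
    hSP hSi hBi hBB]
  refine Fintype.sum_equiv e _ _ fun w => ?_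
  simp only [e, Equiv.coe_fn_mk, restrAny_val Finset.subset_union_left]
  rw [← hP, Finset.prod_biUnion hPd]
  refine congrArg _ (Finset.prod_congr rfl fun k hk => Finset.prod_congr rfl fun j hj => ?_)
  rw [restrAny_val ((Finset.subset_biUnion_of_mem B hk).trans Finset.subset_union_right),
    restrAny_val (Finset.subset_biUnion_of_mem Atr hj)]

/-- correctness of the acyclic tuple-sensitivity algorithm (TSens).  In
the join-tree model, for every vertex `i` and every tuple `t` on `𝔸_i`, the upward tuple
sensitivity factorizes as
`δ⁺(t,i) = ⊤_i(t|_{S_i}) ⬝ ∏_{c ∈ children(i)} ⊥_c(t|_{S_c})` (the factor `⊤_i(t|_{S_i})`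
equals `1` when `i` is the root, by definition of `topJ`, and the product over children
is empty, hence `1`, when `i` is a leaf). -/
theorem tuple_sensitivity_factorization
    (m : ℕ) (A : Type) [Fintype A] [DecidableEq A] (V : A → Type)
    [∀ a, Fintype (V a)] [∀ a, DecidableEq (V a)] [∀ a, Nonempty (V a)]
    (Atr : Fin m → Finset A) (hcov : ∀ a : A, ∃ i : Fin m, a ∈ Atr i)
    (p : Fin m → Fin m) (r : Fin m)
    (hroot : p r = r)
    (hreach : ∀ i : Fin m, ∃ k : ℕ, p^[k] i = r)
    (hRI : ∀ a : A, ∃ t : Fin m, ∀ i : Fin m, a ∈ Atr i →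
        ∃ k : ℕ, p^[k] i = t ∧ ∀ l ≤ k, a ∈ Atr (p^[l] i))
    (R : ∀ i : Fin m, (∀ a : {x // x ∈ Atr i}, V a.val) → ℕ)
    (i : Fin m) (t : ∀ a : {x // x ∈ Atr i}, V a.val) :
    deltaP m A V Atr R i t
      = topJ V Atr p r R i (restrAny V t)
          * ∏ c ∈ Finset.univ.filter (fun c => p c = i ∧ c ≠ r),
              botJ V Atr p r R c (restrAny V t) := by
  have hsplit := sum_ite_mul_prod_erase_eq_prod_sum Atr hcov R i t
    (Finset.insertNone (children p r i)) (branch p i) (fun k => sepAttr Atr p r (k.getD i))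
    (biUnion_branch hroot hreach i) (pairwiseDisjoint_branch hroot hreach i)
    (fun _ hk => sepAttr_subset_biUnion_branch hroot hreach hk)
    (fun _ hk => sepAttr_subset_Atr hk)
    (fun _ hk _ hj _ hj' _ ha ha' => mem_sepAttr_of_mem_branch hreach hRI hk hj hj' ha ha')
  rw [Finset.prod_insertNone] at hsplit
  rw [deltaP_eq_sum]
  -- `deltaP` compares tuples with the given `DecidableEq` instances, the joins classically
  convert hsplit using 4 <;> rfl
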